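/- arXiv:1906.09098 — 2 statements merged into one kernel-verified Lean document; each statement's English description precedes it below -/
import Mathlib

section
/- Let a > 0 and let g : ℝ → ℝ be an arbitrary function. For real numbers 0 < s < t define the 2×2 real matrix M^{[s,t]} by: M^{[s,t]} = ((0, 0), (g(t), 1)) (rows listed) if t < a, and M^{[s,t]} = 0 (the zero matrix) if t ≥ a. Then M^{[s,t]} = M^{[s,τ]} · M^{[τ,t]} for all 0 < s < τ < t. -/
theorem Matrix.bottomRow_one_mul_bottomRow_one {R : Type*} [Semiring R] (x y : R) :
    !![0, 0; x, 1] * !![0, 0; y, 1] = !![0, 0; y, 1] := by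
  rw [Matrix.mul_fin_two]
  simp

theorem ite_lt_mul_ite_lt_of_lt {ι R : Type*} [LinearOrder ι] [Semiring R] (a : ι) (g : ι → R)
    {τ t : ι} (hτt : τ < t) :
    ((if τ < a then !![0, 0; g τ, 1] else 0) * if t < a then !![0, 0; g t, 1] else 0) =
      if t < a then !![0, 0; g t, 1] else 0 := by
  by_cases ht : t < a
  · rw [if_pos ht, if_pos (hτt.trans ht), Matrix.bottomRow_one_mul_bottomRow_one]
  · rw [if_neg ht, mul_zero]

theorem chapman_kolmogorov_M4_general (a : ℝ) (g : ℝ → ℝ)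
    (M : ℝ → ℝ → Matrix (Fin 2) (Fin 2) ℝ)
    (hM : ∀ s t : ℝ, 0 < s → s < t → M s t = if t < a then !![0, 0; g t, 1] else 0) :
    ∀ s τ t : ℝ, 0 < s → s < τ → τ < t → M s t = M s τ * M τ t := by
  intro s τ t hs hsτ hτt
  rw [hM s t hs (hsτ.trans hτt), hM s τ hs hsτ, hM τ t (hs.trans hsτ) hτt,
    ite_lt_mul_ite_lt_of_lt a g hτt]

/-- The family `M^{[s,t]} = !![0, 0; g(t), 1]` if `t < a` and `0` if `t ≥ a`
(for `0 < s < t`) satisfies the Chapman–Kolmogorov equation for all `0 < s < τ < t`. -/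
theorem chapman_kolmogorov_M4 (a : ℝ) (ha : 0 < a) (g : ℝ → ℝ)
    (M : ℝ → ℝ → Matrix (Fin 2) (Fin 2) ℝ)
    (hM : ∀ s t : ℝ, 0 < s → s < t → M s t = if t < a then !![0, 0; g t, 1] else 0) :
    ∀ s τ t : ℝ, 0 < s → s < τ → τ < t → M s t = M s τ * M τ t :=
  chapman_kolmogorov_M4_general a g M hM
end

section
/- Let M = (m_{ij}) be a 2×2 real matrix and let E_M be the two-dimensional real evolution algebra with structural matrix M. Then E_M is isomorphic to the evolution algebra E_4 (with structural matrix ((0,1),(0,0)), i.e. e₁e₁ = e₂, e₂e₂ = 0) if and only if M = ((0,β),(0,0)) for some real β ≠ 0 or M = ((0,0),(γ,0)) for some real γ ≠ 0. -/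
/-!
In `E₄` one has `x · y = x₁ y₁ f₂`. An isomorphism `φ : E_M → E₄` sends `e₁, e₂` to a basis
`u, v` with `u · v = 0`, i.e. `u₁ v₁ = 0`; after possibly swapping `e₁` and `e₂`, `v₁ = 0`, so
`u₁ v₂ ≠ 0`. Then `v · v = 0` forces `e₂e₂ = 0`, while `u · u = u₁² f₂ = (u₁² / v₂) v` forces
`e₁e₁ = (u₁² / v₂) e₂`.
Conversely `x ↦ β x` is an isomorphism `E_{!![0,β;0,0]} ≅ E₄`, and swapping the basis handles
the other family.
-/

/-- The evolution-algebra product on `ℝ²` determined by a structural matrix `A`: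
`e_i · e_i = a_{i1} e₁ + a_{i2} e₂` and `e₁ · e₂ = e₂ · e₁ = 0`. -/
noncomputable def evMul (A : Matrix (Fin 2) (Fin 2) ℝ) (x y : Fin 2 → ℝ) : Fin 2 → ℝ :=
  fun k => x 0 * y 0 * A 0 k + x 1 * y 1 * A 1 k

/-- Two 2-dimensional real evolution algebras (given by their structural matrices) are
isomorphic: there is a bijective linear map `φ` with `φ(x·y) = φ(x)·φ(y)`. -/
def EvIso (A B : Matrix (Fin 2) (Fin 2) ℝ) : Prop :=
  ∃ φ : (Fin 2 → ℝ) ≃ₗ[ℝ] (Fin 2 → ℝ), ∀ x y : Fin 2 → ℝ, φ (evMul A x y) = evMul B (φ x) (φ y)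

open Matrix

noncomputable abbrev basisSwap : (Fin 2 → ℝ) ≃ₗ[ℝ] (Fin 2 → ℝ) :=
  LinearEquiv.funCongrLeft ℝ ℝ (Equiv.swap 0 1)

lemma evMul_single_self (A : Matrix (Fin 2) (Fin 2) ℝ) (i : Fin 2) :
    evMul A (Pi.single i 1) (Pi.single i 1) = A i := by
  funext k; fin_cases i <;> simp [evMul]

lemma evMul_single_zero_single_one (A : Matrix (Fin 2) (Fin 2) ℝ) :
    evMul A (Pi.single 0 1) (Pi.single 1 1) = 0 := by
  funext k; simp [evMul]

lemma evMul_E4 (x y : Fin 2 → ℝ) : evMul !![0, 1; 0, 0] x y = ![0, x 0 * y 0] := by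
  funext k; fin_cases k <;> simp [evMul]

lemma basisSwap_evMul (A : Matrix (Fin 2) (Fin 2) ℝ) (x y : Fin 2 → ℝ) :
    basisSwap (evMul (A.submatrix (Equiv.swap 0 1) (Equiv.swap 0 1)) x y) =
      evMul A (basisSwap x) (basisSwap y) := by
  funext k; simp [evMul, LinearMap.funLeft, Equiv.swap_apply_self]; ring

lemma basisSwap_single (i : Fin 2) :
    basisSwap (Pi.single i 1) = Pi.single (Equiv.swap 0 1 i) 1 := by
  funext k; fin_cases i <;> fin_cases k <;> simp [LinearMap.funLeft]

lemma evIso_submatrix_swap (A : Matrix (Fin 2) (Fin 2) ℝ) :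
    EvIso (A.submatrix (Equiv.swap 0 1) (Equiv.swap 0 1)) A :=
  ⟨basisSwap, basisSwap_evMul A⟩

lemma EvIso.trans {A B C : Matrix (Fin 2) (Fin 2) ℝ} (hAB : EvIso A B) (hBC : EvIso B C) :
    EvIso A C := by
  obtain ⟨φ, hφ⟩ := hAB
  obtain ⟨ψ, hψ⟩ := hBC
  exact ⟨φ.trans ψ, fun x y => by simp [hφ, hψ]⟩

lemma submatrix_swap_upper (c : ℝ) :
    (!![0, c; 0, 0] : Matrix (Fin 2) (Fin 2) ℝ).submatrix (Equiv.swap 0 1) (Equiv.swap 0 1) =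
      !![0, 0; c, 0] := by
  ext i j; fin_cases i <;> fin_cases j <;> simp

lemma evIso_upper_E4 (β : ℝ) (hβ : β ≠ 0) : EvIso !![0, β; 0, 0] !![0, 1; 0, 0] := by
  refine ⟨LinearEquiv.smulOfNeZero ℝ _ β hβ, fun x y => ?_⟩
  funext k; fin_cases k <;> simp [evMul]; ring

lemma LinearEquiv.det_fin_two_ne_zero {K : Type*} [Field K] (φ : (Fin 2 → K) ≃ₗ[K] (Fin 2 → K)) :
    φ (Pi.single 0 1) 0 * φ (Pi.single 1 1) 1 - φ (Pi.single 1 1) 0 * φ (Pi.single 0 1) 1 ≠ 0 := by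
  have h := φ.isUnit_det'.ne_zero
  rw [← LinearMap.det_toMatrix', det_fin_two] at h
  simpa [LinearMap.toMatrix'_apply] using h

lemma eq_upper_of_evMul_hom_E4 {M : Matrix (Fin 2) (Fin 2) ℝ}
    (φ : (Fin 2 → ℝ) ≃ₗ[ℝ] (Fin 2 → ℝ))
    (hφ : ∀ x y, φ (evMul M x y) = evMul !![0, 1; 0, 0] (φ x) (φ y))
    (hv : φ (Pi.single 1 1) 0 = 0) : ∃ β ≠ 0, M = !![0, β; 0, 0] := by
  set u := φ (Pi.single 0 1) with hu_def
  set v := φ (Pi.single 1 1) with hv_def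
  have huv : u 0 * v 1 ≠ 0 := by simpa [u, v, hv] using φ.det_fin_two_ne_zero
  have hu : u 0 ≠ 0 := left_ne_zero_of_mul huv
  have hv1 : v 1 ≠ 0 := right_ne_zero_of_mul huv
  have hM1 : M 1 = 0 := φ.injective <| by
    rw [← evMul_single_self M 1, hφ, evMul_E4, ← hv_def, hv, map_zero]; simp
  set β := u 0 ^ 2 / v 1
  have hM0 : M 0 = β • Pi.single 1 1 := φ.injective <| by
    rw [← evMul_single_self M 0, hφ, map_smul, evMul_E4, ← hu_def, ← hv_def]
    funext k; fin_cases k <;> simp [β, hv]; field_simp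
  refine ⟨β, div_ne_zero (pow_ne_zero 2 hu) hv1, ?_⟩
  ext i j; fin_cases i <;> fin_cases j <;> simp [hM0, hM1]

/-- `E_M ≅ E₄` iff `M = !![0,β;0,0]` with `β ≠ 0` or `M = !![0,0;γ,0]` with `γ ≠ 0`. -/
theorem iso_to_E4_iff (M : Matrix (Fin 2) (Fin 2) ℝ) :
    EvIso M !![0, 1; 0, 0] ↔
      (∃ β : ℝ, β ≠ 0 ∧ M = !![0, β; 0, 0]) ∨ (∃ γ : ℝ, γ ≠ 0 ∧ M = !![0, 0; γ, 0]) := by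
  constructor
  · rintro ⟨φ, hφ⟩
    have hperp : φ (Pi.single 0 1) 0 * φ (Pi.single 1 1) 0 = 0 := by
      simpa [evMul_single_zero_single_one, evMul_E4] using
        congrFun (hφ (Pi.single 0 1) (Pi.single 1 1)) 1
    rcases mul_eq_zero.mp hperp with hu | hv
    · obtain ⟨γ, hγ, hM⟩ := eq_upper_of_evMul_hom_E4
        (M := M.submatrix (Equiv.swap 0 1) (Equiv.swap 0 1)) (basisSwap.trans φ)
        (fun x y => by rw [LinearEquiv.trans_apply, basisSwap_evMul, hφ]; rfl)
        (by rwa [LinearEquiv.trans_apply, basisSwap_single])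
      refine Or.inr ⟨γ, hγ, ?_⟩
      rw [← submatrix_swap_upper, ← hM]
      ext i j; simp
    · exact Or.inl (eq_upper_of_evMul_hom_E4 φ hφ hv)
  · rintro (⟨β, hβ, rfl⟩ | ⟨γ, hγ, rfl⟩)
    · exact evIso_upper_E4 β hβ
    · rw [← submatrix_swap_upper]
      exact (evIso_submatrix_swap _).trans (evIso_upper_E4 γ hγ)
end
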